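/- arXiv:2312.05869 — 7 statements merged into one kernel-verified Lean document; each statement's English description precedes it below -/
import Mathlib

section
/- (Lemma 2 of the paper, combinatorial form.) Let R be a finite set of n replicas and H ⊆ R the honest replicas with |R \ H| ≤ f. Let NV and FV be functions assigning to each replica the finite set of blocks for which it broadcast a notarization vote, respectively a finalization vote, and suppose every honest replica r ∈ H satisfies: if b ∈ FV(r) then NV(r) ⊆ {b} (an honest replica finalization-votes for b only if b is the only block it notarization-voted for). If b ≠ b' are blocks such that |{r ∈ R : b ∈ FV(r)}| ≥ ⌈(n+f+1)/2⌉ and |{r ∈ R : b' ∈ NV(r)}| ≥ ⌈(n+f+1)/2⌉, a contradiction follows. In other words, if a block b is SP-finalized (receives ⌈(n+f+1)/2⌉ finalization votes), no other block of the same round can be notarized (receive ⌈(n+f+1)/2⌉ notarization votes). -/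
/-- Lemma 2 (combinatorial form): if a block b receives ⌈(n+f+1)/2⌉
finalization votes (SP-finalization), then no other block b' can receive
⌈(n+f+1)/2⌉ notarization votes, given that every honest replica
finalization-votes for b only if b is the only block it notarization-voted for. -/
theorem sp_finalization_excludes_notarization
    {ι B : Type*} [DecidableEq ι] [DecidableEq B]
    (R H : Finset ι) (n f : ℕ)
    (NV FV : ι → Finset B)
    (hR : R.card = n)
    (hHR : H ⊆ R) (hByz : (R \ H).card ≤ f)
    (honest : ∀ r ∈ H, ∀ b ∈ FV r, NV r ⊆ {b})
    (b b' : B) (hne : b ≠ b')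
    (hFin : (n + f + 2) / 2 ≤ (R.filter (fun r => b ∈ FV r)).card)
    (hNot : (n + f + 2) / 2 ≤ (R.filter (fun r => b' ∈ NV r)).card) :
    False := by
  set A := R.filter (fun r => b ∈ FV r) with hA
  set C := R.filter (fun r => b' ∈ NV r) with hC
  have hAR : A ⊆ R := Finset.filter_subset _ _
  have hCR : C ⊆ R := Finset.filter_subset _ _
  have hunion : (A ∪ C).card ≤ n := hR ▸ Finset.card_le_card (Finset.union_subset hAR hCR)
  have hsum : n + f + 1 ≤ A.card + C.card := by
    have : n + f + 1 ≤ (n + f + 2) / 2 + (n + f + 2) / 2 := by omega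
    omega
  have hinter : f + 1 ≤ (A ∩ C).card := by
    have := Finset.card_union_add_card_inter A C
    omega
  -- A ∩ C contains an honest replica
  have hnotsub : ¬ (A ∩ C ⊆ R \ H) := fun hsub =>
    absurd (le_trans hinter (Finset.card_le_card hsub)) (by omega)
  obtain ⟨r, hrAC, hrnot⟩ := Finset.not_subset.mp hnotsub
  have hrA : r ∈ A := (Finset.mem_inter.mp hrAC).1
  have hrC : r ∈ C := (Finset.mem_inter.mp hrAC).2
  have hrR : r ∈ R := hAR hrA
  have hrH : r ∈ H := by
    by_contra h
    exact hrnot (Finset.mem_sdiff.mpr ⟨hrR, h⟩)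
  have hbFV : b ∈ FV r := (Finset.mem_filter.mp hrA).2
  have hb'NV : b' ∈ NV r := (Finset.mem_filter.mp hrC).2
  have := honest r hrH b hbFV hb'NV
  simp at this
  exact hne this.symm
end

section
/- Let R be a finite set of n replicas, H ⊆ R the honest replicas with |R \ H| ≤ f, and let V assign to each replica the finite set of blocks for which it broadcast a fast vote, with |V(r)| ≤ 1 for every r ∈ H (honest replicas fast-vote at most once per round). Fix a block b and let supp(b) = {r ∈ R : b ∈ V(r)}. If the set {r ∈ R : ∃ b' ∈ V(r), b' ≠ b} of replicas that fast-voted for some block different from b has cardinality greater than f + p, then |supp(b)| ≤ n − p − 1; in particular b cannot collect the n − p fast votes required for fast-path finalization. -/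
/-- If more than f + p replicas fast-voted for some block different from b,
then b received at most n − p − 1 fast votes, so b cannot be FP-finalized
(honest replicas fast-vote at most once). -/
theorem other_fast_votes_preclude_fp_finalization
    {ι B : Type*} [DecidableEq ι] [DecidableEq B]
    (R H : Finset ι) (n f p : ℕ)
    (V : ι → Finset B)
    (hR : R.card = n)
    (hHR : H ⊆ R) (hByz : (R \ H).card ≤ f)
    (honest : ∀ r ∈ H, (V r).card ≤ 1)
    (b : B)
    (hother : (R.filter (fun r => ∃ b' ∈ V r, b' ≠ b)).card > f + p) :
    (R.filter (fun r => b ∈ V r)).card ≤ n - p - 1 := by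
  set S := R.filter (fun r => ∃ b' ∈ V r, b' ≠ b) with hS
  set T := R.filter (fun r => b ∈ V r) with hT
  -- honest members of S don't support b
  have hdisj : Disjoint T (S ∩ H) := by
    rw [Finset.disjoint_left]
    intro r hrT hrSH
    obtain ⟨hrS, hrH⟩ := Finset.mem_inter.mp hrSH
    obtain ⟨-, b', hb', hne⟩ := Finset.mem_filter.mp hrS
    have hb : b ∈ V r := (Finset.mem_filter.mp hrT).2
    have h2 : 2 ≤ (V r).card := Finset.one_lt_card.mpr ⟨b', hb', b, hb, hne⟩
    have := honest r hrH
    omega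
  -- |S ∩ H| ≥ |S| - f > p
  have hsub : S \ H ⊆ R \ H := by
    intro r hr
    rw [Finset.mem_sdiff] at hr ⊢
    exact ⟨(Finset.mem_filter.mp hr.1).1, hr.2⟩
  have h1 : (S \ H).card ≤ f := le_trans (Finset.card_le_card hsub) hByz
  have h2 : (S ∩ H).card + (S \ H).card = S.card := by
    rw [Finset.card_inter_add_card_sdiff]
  have hSH : p < (S ∩ H).card := by omega
  -- T ∪ (S ∩ H) ⊆ R
  have hsub2 : T ∪ (S ∩ H) ⊆ R := by
    apply Finset.union_subset (Finset.filter_subset _ _)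
    exact le_trans (Finset.inter_subset_left) (Finset.filter_subset _ _)
  have hcard : T.card + (S ∩ H).card ≤ n := by
    rw [← Finset.card_union_of_disjoint hdisj, ← hR]
    exact Finset.card_le_card hsub2
  omega
end

section
/- (Uniqueness of the fast-path-finalized block.) Let R be a finite set of n replicas, H ⊆ R the honest replicas with |R \ H| ≤ f, and let V assign to each replica the finite set of blocks for which it broadcast a fast vote, with |V(r)| ≤ 1 for every r ∈ H. Assume 1 ≤ p ≤ f and n ≥ 3f + 2p − 1. If b₁ ≠ b₂ are blocks with |supp(b₁)| ≥ n − p and |supp(b₂)| ≥ n − p, where supp(b) = {r ∈ R : b ∈ V(r)}, then a contradiction follows; that is, at most one block per round can gather n − p fast votes. -/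
/-- Uniqueness of the FP-finalized block: under Banyan's assumptions
(1 ≤ p ≤ f, n ≥ 3f + 2p − 1, honest replicas fast-vote at most once),
two distinct blocks cannot both gather n − p fast votes. -/
theorem fp_finalized_block_unique
    {ι B : Type*} [DecidableEq ι] [DecidableEq B]
    (R H : Finset ι) (n f p : ℕ)
    (V : ι → Finset B)
    (hR : R.card = n)
    (hHR : H ⊆ R) (hByz : (R \ H).card ≤ f)
    (honest : ∀ r ∈ H, (V r).card ≤ 1)
    (hp1 : 1 ≤ p) (hpf : p ≤ f) (hn : n ≥ 3 * f + 2 * p - 1)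
    (b₁ b₂ : B) (hne : b₁ ≠ b₂)
    (h₁ : n - p ≤ (R.filter (fun r => b₁ ∈ V r)).card)
    (h₂ : n - p ≤ (R.filter (fun r => b₂ ∈ V r)).card) :
    False := by
  set S₁ := R.filter (fun r => b₁ ∈ V r) with hS₁
  set S₂ := R.filter (fun r => b₂ ∈ V r) with hS₂
  have hsub : S₁ ∩ S₂ ⊆ R \ H := by
    intro r hr
    simp only [Finset.mem_inter, hS₁, hS₂, Finset.mem_filter] at hr
    obtain ⟨⟨hrR, hv₁⟩, ⟨_, hv₂⟩⟩ := hr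
    refine Finset.mem_sdiff.mpr ⟨hrR, fun hrH => ?_⟩
    have : ({b₁, b₂} : Finset B) ⊆ V r := by
      intro b hb
      rcases Finset.mem_insert.mp hb with h | h
      · simpa [h] using hv₁
      · simp only [Finset.mem_singleton] at h; simpa [h] using hv₂
    have h2 : ({b₁, b₂} : Finset B).card = 2 := Finset.card_pair hne
    have := Finset.card_le_card this
    have := honest r hrH
    omega
  have hinter : (S₁ ∩ S₂).card ≤ f := le_trans (Finset.card_le_card hsub) hByz
  have hunion : (S₁ ∪ S₂).card ≤ n := by
    rw [← hR]
    exact Finset.card_le_card (Finset.union_subset (Finset.filter_subset _ _)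
      (Finset.filter_subset _ _))
  have hcard := Finset.card_union_add_card_inter S₁ S₂
  omega
end

section
/- (Lemma 3 of the paper, combinatorial form.) Let R be a finite set of n replicas, H ⊆ R the honest replicas with |R \ H| ≤ f, and let V assign to each replica the finite set of blocks for which it broadcast a fast vote, with |V(r)| ≤ 1 for every r ∈ H. Let 𝓑 be the finite set of round-k blocks, Z ⊆ 𝓑 the set of rank-0 (leader) blocks, and b* ∈ Z a rank-0 block of maximal support, i.e., |supp(b)| ≤ |supp(b*)| for all b ∈ Z, where supp(b) = {r ∈ R : b ∈ V(r)} and supp(𝓢) = {r ∈ R : ∃ b ∈ 𝓢, b ∈ V(r)}. Suppose some b ∈ Z is FP-finalized, i.e., |supp(b)| ≥ n − p. Then (i) for every block b' ∈ 𝓑 with b' ≠ b, |supp(b') ∪ supp(𝓑 \ Z)| ≤ f + p, and (ii) |supp(𝓑 \ {b*})| ≤ f + p. Consequently no round-k block other than b satisfies either unlocking condition of Definition 5. -/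
/-- Auxiliary counting lemma: if at least `n - p` replicas satisfy `P`,
and every honest replica satisfying `Q` fails `P`, then at most `f + p`
replicas satisfy `Q`. -/
lemma fp_aux {ι : Type*} [DecidableEq ι]
    (R H : Finset ι) (n f p : ℕ)
    (hR : R.card = n) (hHR : H ⊆ R) (hByz : (R \ H).card ≤ f)
    (Q P : ι → Prop) [DecidablePred Q] [DecidablePred P]
    (hP : n - p ≤ (R.filter P).card)
    (hQ : ∀ r ∈ H, Q r → ¬ P r) :
    (R.filter Q).card ≤ f + p := by
  have hsub : R.filter Q ⊆ (R \ H) ∪ (R \ R.filter P) := by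
    intro r hr
    rw [Finset.mem_filter] at hr
    by_cases hH : r ∈ H
    · refine Finset.mem_union_right _ ?_
      rw [Finset.mem_sdiff, Finset.mem_filter]
      exact ⟨hr.1, fun h => hQ r hH hr.2 h.2⟩
    · exact Finset.mem_union_left _ (Finset.mem_sdiff.mpr ⟨hr.1, hH⟩)
  have h1 : (R \ R.filter P).card = n - (R.filter P).card := by
    rw [Finset.card_sdiff_of_subset (Finset.filter_subset _ _), hR]
  have h2 : (R.filter P).card ≤ n := hR ▸ Finset.card_filter_le _ _
  calc (R.filter Q).card ≤ ((R \ H) ∪ (R \ R.filter P)).card :=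
        Finset.card_le_card hsub
    _ ≤ (R \ H).card + (R \ R.filter P).card := Finset.card_union_le _ _
    _ ≤ f + p := by rw [h1]; omega

/-- Lemma 3 (combinatorial form): if a rank-0 block b is FP-finalized
(|supp(b)| ≥ n − p), then (i) every other block b' of the round satisfies
|supp(b') ∪ supp(𝓑 \ Z)| ≤ f + p and (ii) |supp(𝓑 \ {b*})| ≤ f + p, so no
other block of the round satisfies either unlocking condition. -/
theorem fp_finalization_locks_other_blocks
    {ι B : Type*} [DecidableEq ι] [DecidableEq B]
    (R H : Finset ι) (n f p : ℕ)
    (V : ι → Finset B)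
    (hR : R.card = n)
    (hHR : H ⊆ R) (hByz : (R \ H).card ≤ f)
    (honest : ∀ r ∈ H, (V r).card ≤ 1)
    (𝓑 Z : Finset B) (hZ : Z ⊆ 𝓑)
    (bstar : B) (hbstar : bstar ∈ Z)
    (hmax : ∀ b ∈ Z, (R.filter (fun r => b ∈ V r)).card ≤
                      (R.filter (fun r => bstar ∈ V r)).card)
    (b : B) (hb : b ∈ Z)
    (hfp : n - p ≤ (R.filter (fun r => b ∈ V r)).card) :
    (∀ b' ∈ 𝓑, b' ≠ b →
        ((R.filter (fun r => b' ∈ V r)) ∪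
          (R.filter (fun r => ∃ c ∈ 𝓑 \ Z, c ∈ V r))).card ≤ f + p) ∧
    (R.filter (fun r => ∃ c ∈ 𝓑 \ {bstar}, c ∈ V r)).card ≤ f + p := by
  -- honest replicas vote for at most one block
  have hone : ∀ r ∈ H, ∀ c c', c ∈ V r → c' ∈ V r → c = c' := by
    intro r hH c c' hc hc'
    by_contra hne
    have : 1 < (V r).card := Finset.one_lt_card.mpr ⟨c, hc, c', hc', hne⟩
    exact absurd (honest r hH) (by omega)
  constructor
  · intro b' hb' hne
    rw [← Finset.filter_or]
    refine fp_aux R H n f p hR hHR hByz _ (fun r => b ∈ V r) hfp ?_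
    rintro r hH (hq | ⟨c, hc, hcv⟩) hpb
    · exact hne (hone r hH b' b hq hpb)
    · rw [Finset.mem_sdiff] at hc
      exact hc.2 (hone r hH c b hcv hpb ▸ hb)
  · have hfp' : n - p ≤ (R.filter (fun r => bstar ∈ V r)).card :=
      le_trans hfp (hmax b hb)
    refine fp_aux R H n f p hR hHR hByz _ (fun r => bstar ∈ V r) hfp' ?_
    rintro r hH ⟨c, hc, hcv⟩ hps
    rw [Finset.mem_sdiff, Finset.mem_singleton] at hc
    exact hc.2 (hone r hH c bstar hcv hps)
end

section
/- (Condition 2 precludes fast-path finalization of any leader block.) Let R be a finite set of n replicas, H ⊆ R the honest replicas with |R \ H| ≤ f, and let V assign to each replica the finite set of blocks for which it broadcast a fast vote, with |V(r)| ≤ 1 for every r ∈ H. Let 𝓑 be a finite set of blocks, Z ⊆ 𝓑 the rank-0 blocks, and b* ∈ Z with |supp(b)| ≤ |supp(b*)| for all b ∈ Z, where supp(b) = {r ∈ R : b ∈ V(r)} and supp(𝓢) = {r ∈ R : ∃ c ∈ 𝓢, c ∈ V(r)}. If |supp(𝓑 \ {b*})| > f + p, then every b ∈ Z satisfies |supp(b)|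 ≤ n − p − 1, i.e., no rank-0 block can collect the n − p fast votes required for FP-finalization. -/
/-- Condition 2 precludes FP-finalization of any leader block: if the support
of all blocks other than the maximal-support rank-0 block b* exceeds f + p,
then every rank-0 block has support at most n − p − 1. -/
theorem condition2_precludes_fp_finalization
    {ι B : Type*} [DecidableEq ι] [DecidableEq B]
    (R H : Finset ι) (n f p : ℕ)
    (V : ι → Finset B)
    (hR : R.card = n)
    (hHR : H ⊆ R) (hByz : (R \ H).card ≤ f)
    (honest : ∀ r ∈ H, (V r).card ≤ 1)
    (𝓑 Z : Finset B) (hZ : Z ⊆ 𝓑)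
    (bstar : B) (hbstar : bstar ∈ Z)
    (hmax : ∀ b ∈ Z, (R.filter (fun r => b ∈ V r)).card ≤
                      (R.filter (fun r => bstar ∈ V r)).card)
    (hcond2 : (R.filter (fun r => ∃ c ∈ 𝓑 \ {bstar}, c ∈ V r)).card > f + p) :
    ∀ b ∈ Z, (R.filter (fun r => b ∈ V r)).card ≤ n - p - 1 := by
  intro b hb
  refine le_trans (hmax b hb) ?_
  set A := R.filter (fun r => bstar ∈ V r) with hA
  set C := R.filter (fun r => ∃ c ∈ 𝓑 \ {bstar}, c ∈ V r) with hC
  have hinter : A ∩ C ⊆ R \ H := by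
    intro r hr
    simp only [hA, hC, Finset.mem_inter, Finset.mem_filter] at hr
    obtain ⟨⟨hrR, hbv⟩, -, c, hc, hcv⟩ := hr
    simp only [Finset.mem_sdiff, Finset.mem_singleton] at hc
    rw [Finset.mem_sdiff]
    refine ⟨hrR, fun hrH => ?_⟩
    have h1 := honest r hrH
    have : c = bstar := by
      by_contra hne
      have : 2 ≤ (V r).card := Finset.one_lt_card.mpr ⟨c, hcv, bstar, hbv, hne⟩
      omega
    exact hc.2 this
  have hunion : (A ∪ C).card ≤ n := by
    rw [← hR]
    exact Finset.card_le_card (Finset.union_subset (Finset.filter_subset _ _)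
      (Finset.filter_subset _ _))
  have hsum := Finset.card_union_add_card_inter A C
  have hint : (A ∩ C).card ≤ f := le_trans (Finset.card_le_card hinter) hByz
  omega
end

section
/- (Safety theorem, explicit double-finalization case.) Let R be a finite set of n replicas, H ⊆ R the honest replicas with |R \ H| ≤ f, and assume 1 ≤ p ≤ f and n ≥ 3f + 2p − 1. Let NV, FaV, FV assign to each replica the finite set of blocks for which it broadcast a notarization vote, fast vote, and finalization vote respectively, and suppose every honest replica r ∈ H satisfies: (i) FaV(r) ⊆ NV(r) (fast votes are sent alongside notarization votes), and (ii) if b ∈ FV(r) then NV(r) ⊆ {b}. If b ≠ b' are blocks with |{r ∈ R : b ∈ FV(r)}| ≥ ⌈(n+f+1)/2⌉ and |{r ∈ R : b' ∈ FaV(r)}| ≥ n − p, then a contradiction follows; that is, a block cannot be SP-finalized while a different block of the same round is FP-finalized. -/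
/-- Safety (explicit double-finalization case): a block b cannot be
SP-finalized (⌈(n+f+1)/2⌉ finalization votes) while a different block b' of
the same round is FP-finalized (n − p fast votes), given that honest replicas
send fast votes only alongside notarization votes and finalization-vote for b
only if b is the only block they notarization-voted for. -/
theorem no_sp_and_fp_double_finalization
    {ι B : Type*} [DecidableEq ι] [DecidableEq B]
    (R H : Finset ι) (n f p : ℕ)
    (NV FaV FV : ι → Finset B)
    (hR : R.card = n)
    (hHR : H ⊆ R) (hByz : (R \ H).card ≤ f)
    (hp1 : 1 ≤ p) (hpf : p ≤ f) (hn : n ≥ 3 * f + 2 * p - 1)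
    (honest₁ : ∀ r ∈ H, FaV r ⊆ NV r)
    (honest₂ : ∀ r ∈ H, ∀ b ∈ FV r, NV r ⊆ {b})
    (b b' : B) (hne : b ≠ b')
    (hSP : (n + f + 2) / 2 ≤ (R.filter (fun r => b ∈ FV r)).card)
    (hFP : n - p ≤ (R.filter (fun r => b' ∈ FaV r)).card) :
    False := by
  set S := R.filter (fun r => b ∈ FV r) with hS
  set T := R.filter (fun r => b' ∈ FaV r) with hT
  have hsub : S ∩ T ⊆ R \ H := by
    intro r hr
    simp only [hS, hT, Finset.mem_inter, Finset.mem_filter] at hr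
    rw [Finset.mem_sdiff]
    refine ⟨hr.1.1, fun hrH => ?_⟩
    have : b' ∈ ({b} : Finset B) :=
      honest₂ r hrH b hr.1.2 (honest₁ r hrH hr.2.2)
    exact hne (Finset.mem_singleton.mp this).symm
  have hint : (S ∩ T).card ≤ f := le_trans (Finset.card_le_card hsub) hByz
  have hunion : (S ∪ T).card ≤ n := by
    rw [← hR]
    exact Finset.card_le_card (Finset.union_subset (Finset.filter_subset _ _)
      (Finset.filter_subset _ _))
  have hcards := Finset.card_union_add_card_inter S T
  omega
end

section
/- (Lemma 1 of the paper, combinatorial form.) Let R be a finite set of n replicas, H ⊆ R the honest replicas with |R \ H| ≤ f, assume 1 ≤ p ≤ f and n ≥ 3f + 2p − 1. Let V assign to each replica the finite set of blocks for which it broadcast a fast vote, let 𝓑 be a finite set of blocks with V(r) ⊆ 𝓑 and |V(r)| = 1 for every r ∈ H (every honest replica casts exactly one fast vote, for a received block), let Z ⊆ 𝓑 be the nonempty set of rank-0 blocks, and let b* ∈ Z satisfy |supp(b)| ≤ |supp(b*)| for all b ∈ Z, where supp(b) = {r ∈ R : b ∈ V(r)} and supp(𝓢) = {r ∈ R : ∃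 c ∈ 𝓢, c ∈ V(r)}. Suppose further that either Z = {b*}, or there exists a replica l ∈ R \ H with l ∈ supp(b) for every b ∈ Z (a Byzantine leader whose fast vote is contained in every rank-0 block). Then |supp(b*) ∪ supp(𝓑 \ Z)| > f + p or |supp(𝓑 \ {b*})| > f + p; that is, at least one block of the round is unlocked according to Definition 5. -/
/-- Lemma 1 (combinatorial form): if every honest replica casts exactly one
fast vote for a received block, and either there is a unique rank-0 block or a
Byzantine leader's fast vote supports every rank-0 block, then at least one
block of the round is unlocked: either the maximal-support rank-0 block b*
satisfies Condition 1, or all blocks are unlocked by Condition 2. -/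
theorem some_block_is_unlocked
    {ι B : Type*} [DecidableEq ι] [DecidableEq B]
    (R H : Finset ι) (n f p : ℕ)
    (V : ι → Finset B)
    (hR : R.card = n)
    (hHR : H ⊆ R) (hByz : (R \ H).card ≤ f)
    (hp1 : 1 ≤ p) (hpf : p ≤ f) (hn : n ≥ 3 * f + 2 * p - 1)
    (𝓑 : Finset B)
    (honest : ∀ r ∈ H, V r ⊆ 𝓑 ∧ (V r).card = 1)
    (Z : Finset B) (hZ : Z ⊆ 𝓑) (hZne : Z.Nonempty)
    (bstar : B) (hbstar : bstar ∈ Z)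
    (hmax : ∀ b ∈ Z, (R.filter (fun r => b ∈ V r)).card ≤
                      (R.filter (fun r => bstar ∈ V r)).card)
    (hleader : Z = {bstar} ∨
        ∃ l ∈ R \ H, ∀ b ∈ Z, l ∈ R.filter (fun r => b ∈ V r)) :
    ((R.filter (fun r => bstar ∈ V r)) ∪
      (R.filter (fun r => ∃ c ∈ 𝓑 \ Z, c ∈ V r))).card > f + p ∨
    (R.filter (fun r => ∃ c ∈ 𝓑 \ {bstar}, c ∈ V r)).card > f + p := by
  classical
  set S := R.filter (fun r => bstar ∈ V r) with hS
  set T := R.filter (fun r => ∃ c ∈ 𝓑 \ {bstar}, c ∈ V r) with hT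
  by_cases h2 : T.card > f + p
  · exact Or.inr h2
  push_neg at h2
  left
  have hHcard : (R \ H).card + H.card = n := by
    rw [Finset.card_sdiff_add_card_eq_card hHR, hR]
  -- honest replicas not in T support bstar
  have hsub : H \ T ⊆ S := by
    intro r hr
    obtain ⟨hrH, hrT⟩ := Finset.mem_sdiff.mp hr
    obtain ⟨hVB, hV1⟩ := honest r hrH
    obtain ⟨c, hc⟩ := Finset.card_eq_one.mp hV1
    have hcV : c ∈ V r := by rw [hc]; exact Finset.mem_singleton_self c
    have hcB : c ∈ 𝓑 := hVB hcV
    have hcb : c = bstar := by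
      by_contra hne
      exact hrT (Finset.mem_filter.mpr ⟨hHR hrH,
        ⟨c, Finset.mem_sdiff.mpr ⟨hcB, by simpa using hne⟩, hcV⟩⟩)
    exact Finset.mem_filter.mpr ⟨hHR hrH, hcb ▸ hcV⟩
  have hsplit : (H ∩ T).card + (H \ T).card = H.card :=
    Finset.card_inter_add_card_sdiff H T
  -- the unique-leader-block case
  have huniq : Z = {bstar} →
      (S ∪ R.filter (fun r => ∃ c ∈ 𝓑 \ Z, c ∈ V r)).card > f + p := by
    intro hZb
    subst hZb
    have hcover : H ⊆ S ∪ R.filter (fun r => ∃ c ∈ 𝓑 \ {bstar}, c ∈ V r) := by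
      intro r hr
      by_cases h : r ∈ T
      · exact Finset.mem_union_right _ h
      · exact Finset.mem_union_left _ (hsub (Finset.mem_sdiff.mpr ⟨hr, h⟩))
    have h1 := Finset.card_le_card hcover
    have h3 := Finset.card_union_le S T
    have h4 : (H \ T).card + 1 ≤ S.card ∨ H.card ≤ (S ∪ T).card := Or.inr h1
    omega
  rcases hleader with hZb | ⟨l, hlRH, hl⟩
  · exact huniq hZb
  by_cases hZ1 : Z = {bstar}
  · exact huniq hZ1
  -- there is another rank-0 block b ≠ bstar
  have hb : ∃ b ∈ Z, b ≠ bstar := by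
    by_contra hc
    push_neg at hc
    exact hZ1 (Finset.eq_singleton_iff_unique_mem.mpr ⟨hbstar, hc⟩)
  obtain ⟨b, hbZ, hbne⟩ := hb
  obtain ⟨hlR, hlH⟩ := Finset.mem_sdiff.mp hlRH
  have hlS : l ∈ S := hl bstar hbstar
  -- the Byzantine leader is also in T, via block b
  have hlT : l ∈ T := by
    have hbV : b ∈ V l := (Finset.mem_filter.mp (hl b hbZ)).2
    exact Finset.mem_filter.mpr ⟨hlR,
      ⟨b, Finset.mem_sdiff.mpr ⟨hZ hbZ, by simpa using hbne⟩, hbV⟩⟩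
  have hlT' : insert l (H ∩ T) ⊆ T := by
    intro r hr
    rcases Finset.mem_insert.mp hr with h | h
    · exact h ▸ hlT
    · exact (Finset.mem_inter.mp h).2
  have hTl : (H ∩ T).card + 1 ≤ T.card := by
    have := Finset.card_le_card hlT'
    rw [Finset.card_insert_of_notMem
      (fun h => hlH (Finset.mem_inter.mp h).1)] at this; omega
  have hlnot : l ∉ H \ T := fun h => hlH (Finset.mem_sdiff.mp h).1
  have hins : insert l (H \ T) ⊆ S := by
    intro r hr
    rcases Finset.mem_insert.mp hr with h | h
    · exact h ▸ hlS
    · exact hsub h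
  have hScard : (H \ T).card + 1 ≤ S.card := by
    have := Finset.card_le_card hins
    rw [Finset.card_insert_of_notMem hlnot] at this; omega
  have hle : S.card ≤ (S ∪ R.filter (fun r => ∃ c ∈ 𝓑 \ Z, c ∈ V r)).card :=
    Finset.card_le_card Finset.subset_union_left
  omega
end
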